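/- Suppose there is a norm ‖·‖_d on traceless self-adjoint operators with d(ψ,φ) = ‖|ψ⟩⟨ψ|−|φ⟩⟨φ|‖_d for all pure states. Then for all density operators ρ, σ: W_1^d(ρ,σ) ≥ ‖ρ−σ‖_{DW_1^d} ≥ ‖ρ−σ‖_d, and when ρ and σ are pure all three quantities are equal to d. -/

import Mathlib

open scoped BigOperators ComplexOrder
open Matrix

noncomputable section

abbrev QV (D : ℕ) := EuclideanSpace ℂ (Fin D)

def qproj {D : ℕ} (ψ : QV D) : Matrix (Fin D) (Fin D) ℂ :=
  Matrix.of fun i j => ψ i * (starRingEnd ℂ) (ψ j)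

/-- A quantum transport plan between `ρ` and `σ`. -/
structure TPlan (D : ℕ) (ρ σ : Matrix (Fin D) (Fin D) ℂ) where
  n : ℕ
  q : Fin n → ℝ
  ψ : Fin n → QV D
  φ : Fin n → QV D
  q_pos : ∀ j, 0 < q j
  ψ_unit : ∀ j, ‖ψ j‖ = 1
  φ_unit : ∀ j, ‖φ j‖ = 1
  margL : ∑ j, (q j : ℂ) • qproj (ψ j) = ρ
  margR : ∑ j, (q j : ℂ) • qproj (φ j) = σ

/-- p-th order transport cost of a plan (before the 1/p root). -/
def Tcost {D : ℕ} (d : QV D → QV D → ℝ) (p : ℝ) {ρ σ : Matrix (Fin D) (Fin D) ℂ}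
    (Q : TPlan D ρ σ) : ℝ :=
  ∑ j, Q.q j * d (Q.ψ j) (Q.φ j) ^ p

/-- The order-p quantum Wasserstein distance. -/
def Wp {D : ℕ} (d : QV D → QV D → ℝ) (p : ℝ) (ρ σ : Matrix (Fin D) (Fin D) ℂ) : ℝ :=
  sInf { x | ∃ Q : TPlan D ρ σ, x = (Tcost d p Q) ^ (1/p) }

/-- The infinite-order quantum Wasserstein distance. -/
def Winf {D : ℕ} (d : QV D → QV D → ℝ) (ρ σ : Matrix (Fin D) (Fin D) ℂ) : ℝ :=
  sInf { x | ∃ Q : TPlan D ρ σ, x = ⨆ j, d (Q.ψ j) (Q.φ j) }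

def IsDensity {D : ℕ} (ρ : Matrix (Fin D) (Fin D) ℂ) : Prop :=
  ρ.PosSemidef ∧ ρ.trace = 1

/-- Hilbert–Schmidt (Frobenius) norm. -/
def frob {D : ℕ} (A : Matrix (Fin D) (Fin D) ℂ) : ℝ :=
  Real.sqrt (∑ i, ∑ j, ‖A i j‖ ^ 2)

/-- Action of a matrix on a vector of the Euclidean space. -/
def act {D : ℕ} (U : Matrix (Fin D) (Fin D) ℂ) (ψ : QV D) : QV D :=
  (EuclideanSpace.equiv (Fin D) ℂ).symm (U.mulVec (EuclideanSpace.equiv (Fin D) ℂ ψ))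

/-- Dual Lipschitz constant of an observable. -/
def Ld {D : ℕ} (d : QV D → QV D → ℝ) (O : Matrix (Fin D) (Fin D) ℂ) : ℝ :=
  sSup { x | ∃ ρ σ : Matrix (Fin D) (Fin D) ℂ, IsDensity ρ ∧ IsDensity σ ∧ ρ ≠ σ ∧
    x = ((O * (ρ - σ)).trace).re / Wp d 1 ρ σ }

/-- Double-dual norm. -/
def DWnorm {D : ℕ} (d : QV D → QV D → ℝ) (X : Matrix (Fin D) (Fin D) ℂ) : ℝ :=
  sSup { x | ∃ O : Matrix (Fin D) (Fin D) ℂ, O.IsHermitian ∧ O.trace = 0 ∧ Ld d O ≤ 1 ∧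
    x = ((O * X).trace).re }

/-- Trace (nuclear) norm. -/
def traceNorm {D : ℕ} (A : Matrix (Fin D) (Fin D) ℂ) : ℝ :=
  ((((Matrix.posSemidef_conjTranspose_mul_self A).1.eigenvectorUnitary : Matrix (Fin D) (Fin D) ℂ) *
    diagonal ((fun x : ℝ => (x : ℂ)) ∘ Real.sqrt ∘ (Matrix.posSemidef_conjTranspose_mul_self A).1.eigenvalues) *
    (star ((Matrix.posSemidef_conjTranspose_mul_self A).1.eigenvectorUnitary :
      Matrix (Fin D) (Fin D) ℂ)))).trace.re

/-! Any transport plan writes `ρ - σ` as `∑ q_j (|ψ_j⟩⟨ψ_j| - |φ_j⟩⟨φ_j|)`, so the triangle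
inequality for `‖·‖_d` gives `‖ρ - σ‖_d ≤ W_1^d(ρ, σ)`. Hence every observable with `L_d(O) ≤ 1`
satisfies `Tr[O(ρ - σ)] ≤ W_1^d(ρ, σ)`, which bounds the double-dual norm from above. Conversely,
a Hahn–Banach norming functional of `ρ - σ` for `‖·‖_d`, realised as `Tr[O ·]` with `O` traceless
Hermitian through the nondegenerate trace pairing, has `L_d(O) ≤ 1` and attains `‖ρ - σ‖_d`.
For pure states the one-term plan gives `W_1^d ≤ d`, which closes the chain. -/

section PureStates

variable {D : ℕ}

lemma qproj_isHermitian (ψ : QV D) : (qproj ψ).IsHermitian := by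
  ext i j
  simp [qproj, Matrix.conjTranspose_apply, mul_comm]

lemma qproj_posSemidef (ψ : QV D) : (qproj ψ).PosSemidef := by
  refine Matrix.PosSemidef.of_dotProduct_mulVec_nonneg (qproj_isHermitian ψ) fun x => ?_
  set c : ℂ := ∑ i, (starRingEnd ℂ) (ψ i) * x i
  have hc : star x ⬝ᵥ (qproj ψ *ᵥ x) = star c * c := by
    simp only [c, dotProduct, mulVec, qproj, of_apply, Pi.star_apply, star_sum, star_mul',
      RCLike.star_def, starRingEnd_self_apply, Finset.sum_mul, Finset.mul_sum]
    rw [Finset.sum_comm]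
    exact Finset.sum_congr rfl fun i _ => Finset.sum_congr rfl fun j _ => by ring
  exact hc ▸ star_mul_self_nonneg c

lemma trace_qproj {ψ : QV D} (hψ : ‖ψ‖ = 1) : (qproj ψ).trace = 1 := by
  have h : ∑ i, ‖ψ i‖ ^ 2 = 1 := by
    rw [← EuclideanSpace.norm_sq_eq, hψ, one_pow]
  simp only [Matrix.trace, diag, qproj, of_apply, Complex.mul_conj, Complex.normSq_eq_norm_sq]
  exact_mod_cast h

lemma isDensity_qproj {ψ : QV D} (hψ : ‖ψ‖ = 1) : IsDensity (qproj ψ) :=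
  ⟨qproj_posSemidef ψ, trace_qproj hψ⟩

lemma IsDensity.exists_sum_qproj {ρ : Matrix (Fin D) (Fin D) ℂ} (hρ : IsDensity ρ) :
    ∃ (p : Fin D → ℝ) (u : Fin D → QV D), (∀ i, 0 ≤ p i) ∧ (∀ i, ‖u i‖ = 1) ∧
      ∑ i, p i = 1 ∧ ∑ i, (p i : ℂ) • qproj (u i) = ρ := by
  have hH : ρ.IsHermitian := hρ.1.1
  have hu : ∀ i, ‖(hH.eigenvectorBasis i : QV D)‖ = 1 := hH.eigenvectorBasis.orthonormal.1
  have hsum : ∑ i, (hH.eigenvalues i : ℂ) • qproj (hH.eigenvectorBasis i) = ρ := by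
    conv_rhs => rw [hH.spectral_theorem, Unitary.conjStarAlgAut_apply]
    ext i j
    rw [Matrix.mul_apply]
    simp only [Matrix.sum_apply, Matrix.smul_apply, qproj, of_apply, mul_diagonal, star_apply,
      IsHermitian.eigenvectorUnitary_apply, Function.comp_apply, RCLike.star_def, smul_eq_mul]
    exact Finset.sum_congr rfl fun k _ => by rw [mul_assoc]; exact mul_left_comm _ _ _
  refine ⟨hH.eigenvalues, fun i => hH.eigenvectorBasis i, hρ.1.eigenvalues_nonneg, hu, ?_, hsum⟩
  have htr := congrArg Matrix.trace hsum
  simp only [trace_sum, trace_smul, trace_qproj (hu _), smul_eq_mul, mul_one, hρ.2] at htr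
  exact_mod_cast htr

end PureStates

namespace TPlan

variable {D : ℕ} {ρ σ : Matrix (Fin D) (Fin D) ℂ}

/-- Transport plans are indexed by `Fin n` with positive weights, so a nonnegatively weighted
coupling is first restricted to its support. -/
def ofNonneg {ι : Type*} [Fintype ι] (w : ι → ℝ) (ψ φ : ι → QV D) (hw : ∀ i, 0 ≤ w i)
    (hψ : ∀ i, ‖ψ i‖ = 1) (hφ : ∀ i, ‖φ i‖ = 1)
    (hρ : ∑ i, (w i : ℂ) • qproj (ψ i) = ρ) (hσ : ∑ i, (w i : ℂ) • qproj (φ i) = σ) :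
    TPlan D ρ σ :=
  let e := (Fintype.equivFin {i // 0 < w i}).symm
  have support_sum (f : ι → QV D) : ∑ k, (w (e k) : ℂ) • qproj (f (e k)) =
      ∑ i, (w i : ℂ) • qproj (f i) := by
    rw [e.sum_comp (fun i => (w i : ℂ) • qproj (f i)),
      ← Finset.sum_subtype _ (fun i => Finset.mem_filter_univ i) fun i => (w i : ℂ) • qproj (f i),
      Finset.sum_filter_of_ne]
    intro i _ hi
    exact (hw i).lt_of_ne' fun h => hi (by simp [h])
  { n := Fintype.card {i // 0 < w i}
    q := fun k => w (e k)
    ψ := fun k => ψ (e k)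
    φ := fun k => φ (e k)
    q_pos := fun k => (e k).2
    ψ_unit := fun k => hψ _
    φ_unit := fun k => hφ _
    margL := (support_sum ψ).trans hρ
    margR := (support_sum φ).trans hσ }

/-- The product coupling of spectral decompositions. -/
lemma nonempty (hρ : IsDensity ρ) (hσ : IsDensity σ) : Nonempty (TPlan D ρ σ) := by
  obtain ⟨p, u, hp, hu, hp1, hpu⟩ := hρ.exists_sum_qproj
  obtain ⟨r, v, hr, hv, hr1, hrv⟩ := hσ.exists_sum_qproj
  refine ⟨ofNonneg (fun x : Fin D × Fin D => p x.1 * r x.2) (fun x => u x.1) (fun x => v x.2)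
    (fun x => mul_nonneg (hp _) (hr _)) (fun x => hu _) (fun x => hv _) ?_ ?_⟩
  · simp only [Fintype.sum_prod_type, Complex.ofReal_mul, mul_comm (p _ : ℂ), mul_smul,
      ← Finset.sum_smul, ← Complex.ofReal_sum, hr1, Complex.ofReal_one,
      one_smul, hpu]
  · rw [Fintype.sum_prod_type_right]
    simp only [Complex.ofReal_mul, mul_smul, ← Finset.sum_smul,
      ← Complex.ofReal_sum, hp1, Complex.ofReal_one, one_smul, hrv]

def pure {ψ φ : QV D} (hψ : ‖ψ‖ = 1) (hφ : ‖φ‖ = 1) : TPlan D (qproj ψ) (qproj φ) where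
  n := 1
  q := fun _ => 1
  ψ := fun _ => ψ
  φ := fun _ => φ
  q_pos := fun _ => one_pos
  ψ_unit := fun _ => hψ
  φ_unit := fun _ => hφ
  margL := by simp
  margR := by simp

end TPlan

section Transport

variable {D : ℕ} {d : QV D → QV D → ℝ} {ρ σ : Matrix (Fin D) (Fin D) ℂ}

lemma Tcost_one (Q : TPlan D ρ σ) : Tcost d 1 Q = ∑ j, Q.q j * d (Q.ψ j) (Q.φ j) := by
  simp only [Tcost, Real.rpow_one]

lemma Wp_one_eq_iInf : Wp d 1 ρ σ = ⨅ Q : TPlan D ρ σ, Tcost d 1 Q := by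
  simp only [Wp, one_div_one, Real.rpow_one, iInf, Set.range, eq_comm]

lemma Tcost_one_nonneg (hd : ∀ a b, 0 ≤ d a b) (Q : TPlan D ρ σ) : 0 ≤ Tcost d 1 Q := by
  rw [Tcost_one]
  exact Finset.sum_nonneg fun j _ => mul_nonneg (Q.q_pos j).le (hd _ _)

lemma Wp_one_nonneg (hd : ∀ a b, 0 ≤ d a b) : 0 ≤ Wp d 1 ρ σ := by
  rw [Wp_one_eq_iInf]
  exact Real.iInf_nonneg (Tcost_one_nonneg hd)

lemma Wp_one_le_Tcost (hd : ∀ a b, 0 ≤ d a b) (Q : TPlan D ρ σ) : Wp d 1 ρ σ ≤ Tcost d 1 Q := by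
  rw [Wp_one_eq_iInf]
  exact ciInf_le ⟨0, Set.forall_mem_range.2 (Tcost_one_nonneg hd)⟩ Q

lemma Wp_one_qproj_le (hd : ∀ a b, 0 ≤ d a b) {ψ φ : QV D} (hψ : ‖ψ‖ = 1) (hφ : ‖φ‖ = 1) :
    Wp d 1 (qproj ψ) (qproj φ) ≤ d ψ φ := by
  simpa [Tcost_one, TPlan.pure] using Wp_one_le_Tcost hd (TPlan.pure hψ hφ)

lemma le_Tcost_one {nd : Matrix (Fin D) (Fin D) ℂ → ℝ} (hadd : ∀ X Y, nd (X + Y) ≤ nd X + nd Y)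
    (hsmul : ∀ (c : ℝ) X, nd ((c : ℂ) • X) = |c| * nd X)
    (hd_eq : ∀ ψ φ : QV D, ‖ψ‖ = 1 → ‖φ‖ = 1 → d ψ φ = nd (qproj ψ - qproj φ))
    (Q : TPlan D ρ σ) : nd (ρ - σ) ≤ Tcost d 1 Q := by
  have hzero : nd 0 = 0 := by simpa using hsmul 0 0
  have hsum : ρ - σ = ∑ j, (Q.q j : ℂ) • (qproj (Q.ψ j) - qproj (Q.φ j)) := by
    simp only [smul_sub, Finset.sum_sub_distrib, Q.margL, Q.margR]
  rw [hsum, Tcost_one]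
  refine (Finset.le_sum_of_subadditive nd hzero.le hadd _ _).trans_eq
    (Finset.sum_congr rfl fun j _ => ?_)
  rw [hsmul, abs_of_pos (Q.q_pos j), hd_eq _ _ (Q.ψ_unit j) (Q.φ_unit j)]

lemma le_Wp_one {nd : Matrix (Fin D) (Fin D) ℂ → ℝ} (hadd : ∀ X Y, nd (X + Y) ≤ nd X + nd Y)
    (hsmul : ∀ (c : ℝ) X, nd ((c : ℂ) • X) = |c| * nd X)
    (hd_eq : ∀ ψ φ : QV D, ‖ψ‖ = 1 → ‖φ‖ = 1 → d ψ φ = nd (qproj ψ - qproj φ))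
    (hρ : IsDensity ρ) (hσ : IsDensity σ) : nd (ρ - σ) ≤ Wp d 1 ρ σ := by
  have := TPlan.nonempty hρ hσ
  rw [Wp_one_eq_iInf]
  exact le_ciInf (le_Tcost_one hadd hsmul hd_eq)

end Transport

namespace AddGroupNorm

variable {E : Type*} [AddCommGroup E] [Module ℝ E]

lemma exists_abs_le_mul [FiniteDimensional ℝ E] (N : AddGroupNorm E)
    (hN : ∀ (c : ℝ) x, N (c • x) = |c| * N x) (f : E →ₗ[ℝ] ℝ) :
    ∃ C, 0 ≤ C ∧ ∀ x, |f x| ≤ C * N x := by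
  let := N.toNormedAddCommGroup
  let : NormedSpace ℝ E := ⟨fun c x => (hN c x).le⟩
  let F := LinearMap.toContinuousLinearMap f
  exact ⟨‖F‖, norm_nonneg F, F.le_opNorm⟩

lemma exists_dual_vector (N : AddGroupNorm E) (hN : ∀ (c : ℝ) x, N (c • x) = |c| * N x) (x : E) :
    ∃ g : E →ₗ[ℝ] ℝ, (∀ y, g y ≤ N y) ∧ g x = N x := by
  let := N.toNormedAddCommGroup
  let : NormedSpace ℝ E := ⟨fun c x => (hN c x).le⟩
  obtain ⟨g, hg, hgx⟩ := exists_dual_vector'' ℝ x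
  refine ⟨g, fun y => ?_, hgx⟩
  calc g y ≤ ‖g‖ * ‖y‖ := (le_abs_self _).trans (g.le_opNorm y)
    _ ≤ N y := mul_le_of_le_one_left (norm_nonneg y) hg

end AddGroupNorm

section TracePairing

variable (D : ℕ)

def tracelessHermitian : Submodule ℝ (Matrix (Fin D) (Fin D) ℂ) where
  carrier := {X | X.IsHermitian ∧ X.trace = 0}
  add_mem' hX hY := ⟨hX.1.add hY.1, by rw [trace_add, hX.2, hY.2, add_zero]⟩
  zero_mem' := ⟨isHermitian_zero, trace_zero _ _⟩
  smul_mem' c X hX := ⟨hX.1.smul (IsSelfAdjoint.all c), by rw [trace_smul, hX.2, smul_zero]⟩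

def traceBilin : Matrix (Fin D) (Fin D) ℂ →ₗ[ℝ] Matrix (Fin D) (Fin D) ℂ →ₗ[ℝ] ℝ :=
  LinearMap.mk₂ ℝ (fun O X => ((O * X).trace).re)
    (fun _ _ _ => by simp [add_mul]) (fun _ _ _ => by simp)
    (fun _ _ _ => by simp [mul_add]) (fun _ _ _ => by simp)

variable {D}

lemma IsDensity.sub_mem_tracelessHermitian {ρ σ : Matrix (Fin D) (Fin D) ℂ} (hρ : IsDensity ρ)
    (hσ : IsDensity σ) : ρ - σ ∈ tracelessHermitian D :=
  ⟨hρ.1.1.sub hσ.1.1, by rw [trace_sub, hρ.2, hσ.2, sub_self]⟩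

lemma traceBilin_self_eq_zero {O : Matrix (Fin D) (Fin D) ℂ} (hO : O.IsHermitian)
    (h : traceBilin D O O = 0) : O = 0 := by
  rw [← trace_conjTranspose_mul_self_eq_zero_iff, hO.eq]
  have hnonneg : 0 ≤ (O * O).trace := by
    simpa [hO.eq] using (posSemidef_conjTranspose_mul_self O).trace_nonneg
  exact Complex.ext h (Complex.nonneg_iff.1 hnonneg).2.symm

lemma exists_traceBilin_eq (g : Module.Dual ℝ (tracelessHermitian D)) :
    ∃ O : tracelessHermitian D, ∀ X : tracelessHermitian D, traceBilin D O X = g X := by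
  let B := (traceBilin D).compl₁₂ (tracelessHermitian D).subtype (tracelessHermitian D).subtype
  have hinj : Function.Injective B := by
    refine (injective_iff_map_eq_zero B).2 fun O hO => Subtype.ext ?_
    exact traceBilin_self_eq_zero O.2.1 (LinearMap.congr_fun hO O)
  obtain ⟨O, hO⟩ := (LinearMap.injective_iff_surjective_of_finrank_eq_finrank
    Subspace.dual_finrank_eq.symm).1 hinj g
  exact ⟨O, LinearMap.congr_fun hO⟩

end TracePairing

section NormOnTraceless

variable {D : ℕ}

structure IsTracelessNorm (nd : Matrix (Fin D) (Fin D) ℂ → ℝ) : Prop where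
  add_le : ∀ X Y, nd (X + Y) ≤ nd X + nd Y
  smul_eq : ∀ (c : ℝ) X, nd ((c : ℂ) • X) = |c| * nd X
  pos : ∀ X : Matrix (Fin D) (Fin D) ℂ, X.IsHermitian → X.trace = 0 → X ≠ 0 → 0 < nd X

namespace IsTracelessNorm

variable {nd : Matrix (Fin D) (Fin D) ℂ → ℝ}

lemma real_smul_eq (hnd : IsTracelessNorm nd) (c : ℝ) (X : Matrix (Fin D) (Fin D) ℂ) :
    nd (c • X) = |c| * nd X := by
  rw [← hnd.smul_eq, ← Complex.coe_smul]

def toAddGroupNorm (hnd : IsTracelessNorm nd) : AddGroupNorm (tracelessHermitian D) where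
  toFun X := nd X
  map_zero' := by simpa using hnd.real_smul_eq 0 0
  add_le' X Y := hnd.add_le X Y
  neg' X := by simpa using hnd.real_smul_eq (-1) X
  eq_zero_of_map_eq_zero' X hX := by
    by_contra hne
    exact (hnd.pos X X.2.1 X.2.2 (by simpa using hne)).ne' hX

lemma toAddGroupNorm_smul (hnd : IsTracelessNorm nd) (c : ℝ) (X : tracelessHermitian D) :
    hnd.toAddGroupNorm (c • X) = |c| * hnd.toAddGroupNorm X :=
  hnd.real_smul_eq c X

lemma pos_of_isDensity (hnd : IsTracelessNorm nd) {ρ σ : Matrix (Fin D) (Fin D) ℂ}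
    (hρ : IsDensity ρ) (hσ : IsDensity σ) (hne : ρ ≠ σ) : 0 < nd (ρ - σ) :=
  let hmem := hρ.sub_mem_tracelessHermitian hσ
  hnd.pos _ hmem.1 hmem.2 (sub_ne_zero.2 hne)

end IsTracelessNorm

end NormOnTraceless

section Duality

variable {D : ℕ} {d : QV D → QV D → ℝ} {nd : Matrix (Fin D) (Fin D) ℂ → ℝ}
  {ρ σ : Matrix (Fin D) (Fin D) ℂ}

/-- `Ld d O` is a genuine supremum, not the junk value of an unbounded set: in finite dimension
`Re Tr[O ·]` is bounded by a multiple of `nd`, which is in turn bounded by `W_1`. -/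
lemma le_Ld (hnd : IsTracelessNorm nd)
    (hW : ∀ ρ σ, IsDensity ρ → IsDensity σ → nd (ρ - σ) ≤ Wp d 1 ρ σ)
    (O : Matrix (Fin D) (Fin D) ℂ) (hρ : IsDensity ρ) (hσ : IsDensity σ) (hne : ρ ≠ σ) :
    ((O * (ρ - σ)).trace).re / Wp d 1 ρ σ ≤ Ld d O := by
  obtain ⟨C, hC0, hC⟩ := hnd.toAddGroupNorm.exists_abs_le_mul hnd.toAddGroupNorm_smul
    ((traceBilin D O).comp (tracelessHermitian D).subtype)
  refine le_csSup ⟨C, ?_⟩ ⟨ρ, σ, hρ, hσ, hne, rfl⟩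
  rintro _ ⟨ρ', σ', hρ', hσ', hne', rfl⟩
  have hWpos := (hnd.pos_of_isDensity hρ' hσ' hne').trans_le (hW ρ' σ' hρ' hσ')
  rw [div_le_iff₀ hWpos]
  calc ((O * (ρ' - σ')).trace).re ≤ C * nd (ρ' - σ') :=
        (le_abs_self _).trans (hC ⟨_, hρ'.sub_mem_tracelessHermitian hσ'⟩)
    _ ≤ C * Wp d 1 ρ' σ' := mul_le_mul_of_nonneg_left (hW ρ' σ' hρ' hσ') hC0

lemma re_trace_mul_sub_le_Wp_one (hd : ∀ a b, 0 ≤ d a b) (hnd : IsTracelessNorm nd)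
    (hW : ∀ ρ σ, IsDensity ρ → IsDensity σ → nd (ρ - σ) ≤ Wp d 1 ρ σ)
    {O : Matrix (Fin D) (Fin D) ℂ} (hO : Ld d O ≤ 1) (hρ : IsDensity ρ) (hσ : IsDensity σ) :
    ((O * (ρ - σ)).trace).re ≤ Wp d 1 ρ σ := by
  rcases eq_or_ne ρ σ with rfl | hne
  · simpa using Wp_one_nonneg hd
  · have hWpos := (hnd.pos_of_isDensity hρ hσ hne).trans_le (hW ρ σ hρ hσ)
    rw [← div_le_one hWpos]
    exact (le_Ld hnd hW O hρ hσ hne).trans hO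

lemma DWnorm_sub_le_Wp_one (hd : ∀ a b, 0 ≤ d a b) (hnd : IsTracelessNorm nd)
    (hW : ∀ ρ σ, IsDensity ρ → IsDensity σ → nd (ρ - σ) ≤ Wp d 1 ρ σ)
    (hρ : IsDensity ρ) (hσ : IsDensity σ) : DWnorm d (ρ - σ) ≤ Wp d 1 ρ σ := by
  refine Real.sSup_le ?_ (Wp_one_nonneg hd)
  rintro _ ⟨O, -, -, hO, rfl⟩
  exact re_trace_mul_sub_le_Wp_one hd hnd hW hO hρ hσ

lemma Ld_le_one (hnd : IsTracelessNorm nd)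
    (hW : ∀ ρ σ, IsDensity ρ → IsDensity σ → nd (ρ - σ) ≤ Wp d 1 ρ σ)
    {O : Matrix (Fin D) (Fin D) ℂ} (hO : ∀ X ∈ tracelessHermitian D, ((O * X).trace).re ≤ nd X) :
    Ld d O ≤ 1 := by
  refine Real.sSup_le ?_ zero_le_one
  rintro _ ⟨ρ, σ, hρ, hσ, hne, rfl⟩
  have hWpos := (hnd.pos_of_isDensity hρ hσ hne).trans_le (hW ρ σ hρ hσ)
  rw [div_le_one hWpos]
  exact (hO _ (hρ.sub_mem_tracelessHermitian hσ)).trans (hW ρ σ hρ hσ)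

lemma le_DWnorm_sub (hd : ∀ a b, 0 ≤ d a b) (hnd : IsTracelessNorm nd)
    (hW : ∀ ρ σ, IsDensity ρ → IsDensity σ → nd (ρ - σ) ≤ Wp d 1 ρ σ)
    (hρ : IsDensity ρ) (hσ : IsDensity σ) : nd (ρ - σ) ≤ DWnorm d (ρ - σ) := by
  obtain ⟨g, hg, hgX⟩ := hnd.toAddGroupNorm.exists_dual_vector hnd.toAddGroupNorm_smul
    ⟨ρ - σ, hρ.sub_mem_tracelessHermitian hσ⟩
  obtain ⟨O, hO⟩ := exists_traceBilin_eq g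
  have hLd : Ld d (O : Matrix (Fin D) (Fin D) ℂ) ≤ 1 :=
    Ld_le_one hnd hW fun X hX => (hO ⟨X, hX⟩).trans_le (hg ⟨X, hX⟩)
  refine le_csSup ⟨Wp d 1 ρ σ, ?_⟩ ⟨O, O.2.1, O.2.2, hLd, (hO _).trans hgX |>.symm⟩
  rintro _ ⟨O', -, -, hO', rfl⟩
  exact re_trace_mul_sub_le_Wp_one hd hnd hW hO' hρ hσ

end Duality

theorem wasserstein_dual_chain_general {D : ℕ} (d : QV D → QV D → ℝ)
    (hdnn : ∀ a b : QV D, 0 ≤ d a b)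
    (nd : Matrix (Fin D) (Fin D) ℂ → ℝ)
    (hnd_tri : ∀ X Y, nd (X + Y) ≤ nd X + nd Y)
    (hnd_smul : ∀ (c : ℝ) (X), nd ((c : ℂ) • X) = |c| * nd X)
    (hnd_pos : ∀ X : Matrix (Fin D) (Fin D) ℂ,
        X.IsHermitian → X.trace = 0 → X ≠ 0 → 0 < nd X)
    (hd_eq : ∀ ψ φ : QV D, ‖ψ‖ = 1 → ‖φ‖ = 1 → d ψ φ = nd (qproj ψ - qproj φ)) :
    (∀ ρ σ : Matrix (Fin D) (Fin D) ℂ, IsDensity ρ → IsDensity σ →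
      nd (ρ - σ) ≤ DWnorm d (ρ - σ) ∧ DWnorm d (ρ - σ) ≤ Wp d 1 ρ σ) ∧
    (∀ ψ φ : QV D, ‖ψ‖ = 1 → ‖φ‖ = 1 →
      Wp d 1 (qproj ψ) (qproj φ) = d ψ φ ∧
      DWnorm d (qproj ψ - qproj φ) = d ψ φ ∧
      nd (qproj ψ - qproj φ) = d ψ φ) := by
  have hnd : IsTracelessNorm nd := ⟨hnd_tri, hnd_smul, hnd_pos⟩
  have hW : ∀ ρ σ, IsDensity ρ → IsDensity σ → nd (ρ - σ) ≤ Wp d 1 ρ σ :=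
    fun ρ σ => le_Wp_one hnd_tri hnd_smul hd_eq
  refine ⟨fun ρ σ hρ hσ => ⟨le_DWnorm_sub hdnn hnd hW hρ hσ, DWnorm_sub_le_Wp_one hdnn hnd hW hρ hσ⟩,
    fun ψ φ hψ hφ => ?_⟩
  have hρ := isDensity_qproj hψ
  have hσ := isDensity_qproj hφ
  have hnd_eq : nd (qproj ψ - qproj φ) = d ψ φ := (hd_eq ψ φ hψ hφ).symm
  have hW_eq : Wp d 1 (qproj ψ) (qproj φ) = d ψ φ :=
    (Wp_one_qproj_le hdnn hψ hφ).antisymm (hnd_eq ▸ hW _ _ hρ hσ)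
  refine ⟨hW_eq, le_antisymm ?_ ?_, hnd_eq⟩
  · exact hW_eq ▸ DWnorm_sub_le_Wp_one hdnn hnd hW hρ hσ
  · exact hnd_eq ▸ le_DWnorm_sub hdnn hnd hW hρ hσ

/-- If `d` is induced by a norm `nd` on traceless self-adjoint operators, then
`W_1^d ≥ ‖·‖_{DW_1^d} ≥ ‖·‖_d`, with equality (to `d`) on pure states. -/
theorem wasserstein_dual_chain {D : ℕ} (d : QV D → QV D → ℝ)
    (hdnn : ∀ a b : QV D, 0 ≤ d a b)
    (hdcont : Continuous fun x : QV D × QV D => d x.1 x.2)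
    (nd : Matrix (Fin D) (Fin D) ℂ → ℝ)
    (hnd_nonneg : ∀ X, 0 ≤ nd X)
    (hnd_tri : ∀ X Y, nd (X + Y) ≤ nd X + nd Y)
    (hnd_smul : ∀ (c : ℝ) (X), nd ((c : ℂ) • X) = |c| * nd X)
    (hnd_pos : ∀ X : Matrix (Fin D) (Fin D) ℂ,
        X.IsHermitian → X.trace = 0 → X ≠ 0 → 0 < nd X)
    (hd_eq : ∀ ψ φ : QV D, ‖ψ‖ = 1 → ‖φ‖ = 1 → d ψ φ = nd (qproj ψ - qproj φ)) :
    (∀ ρ σ : Matrix (Fin D) (Fin D) ℂ, IsDensity ρ → IsDensity σ →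
      nd (ρ - σ) ≤ DWnorm d (ρ - σ) ∧ DWnorm d (ρ - σ) ≤ Wp d 1 ρ σ) ∧
    (∀ ψ φ : QV D, ‖ψ‖ = 1 → ‖φ‖ = 1 →
      Wp d 1 (qproj ψ) (qproj φ) = d ψ φ ∧
      DWnorm d (qproj ψ - qproj φ) = d ψ φ ∧
      nd (qproj ψ - qproj φ) = d ψ φ) :=
  wasserstein_dual_chain_general d hdnn nd hnd_tri hnd_smul hnd_pos hd_eq
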